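/- (Fermat theorem at infinity) Let f : ℝⁿ → ℝ ∪ {±∞} be bounded below with finite infimum f_* := inf_{x ∈ ℝⁿ} f(x). If there exists a sequence x_k with ‖x_k‖ → ∞ such that f(x_k) → f_*, then 0 ∈ ∂f(∞). -/

import Mathlib

open Filter Topology Metric Set Bornology
open scoped InnerProductSpace Pointwise

noncomputable section

/-- Euclidean `n`-space. -/
abbrev En (n : ℕ) : Type := EuclideanSpace ℝ (Fin n)

/-- The Clarke tangent cone at infinity of `C ⊆ E`, where "going to infinity" is
measured by `‖p x‖ → ∞` for a projection map `p`:  `v` belongs to the cone iff for all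
sequences `x k ∈ C` with `‖p (x k)‖ → ∞` and all positive sequences `t k → 0` there is a
sequence `w k → v` with `x k + t k • w k ∈ C` for all `k`. -/
def tangentConeAtInfty {E F : Type*} [NormedAddCommGroup E] [NormedSpace ℝ E] [Norm F]
    (p : E → F) (C : Set E) : Set E :=
  {v | ∀ (x : ℕ → E) (t : ℕ → ℝ), (∀ k, x k ∈ C) →
      Tendsto (fun k => ‖p (x k)‖) atTop atTop →
      (∀ k, 0 < t k) → Tendsto t atTop (𝓝 0) →
      ∃ w : ℕ → E, Tendsto w atTop (𝓝 v) ∧ ∀ k, x k + t k • w k ∈ C}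

/-- The epigraph of an extended-real-valued function. -/
def epig {n : ℕ} (f : En n → EReal) : Set (En n × ℝ) := {p | f p.1 ≤ (p.2 : EReal)}

/-- Clarke tangent cone at infinity of the epigraph of `f`, with respect to the index set
`I = {1,…,n} ⊆ {1,…,n+1}`, i.e. the projection `(x, y) ↦ x`. -/
def Tepi {n : ℕ} (f : En n → EReal) : Set (En n × ℝ) :=
  tangentConeAtInfty Prod.fst (epig f)

/-- Normal cone at infinity of the epigraph of `f` (polar cone of `Tepi f`, using the
inner product `⟪(v,r), (w,s)⟫ = ⟪v,w⟫ + r*s` of `ℝⁿ × ℝ = ℝ^{n+1}`). -/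
def Nepi {n : ℕ} (f : En n → EReal) : Set (En n × ℝ) :=
  {w | ∀ q ∈ Tepi f, ⟪q.1, w.1⟫_ℝ + q.2 * w.2 ≤ 0}

/-- The set `∂f(∞)` of subgradients of `f` at infinity. -/
def subgradInfty {n : ℕ} (f : En n → EReal) : Set (En n) :=
  {ξ | (ξ, (-1:ℝ)) ∈ Nepi f}

/-!
Along the points `(x k, f (x k))` of the epigraph, which go to infinity, the height exceeds the
lower bound `f⋆` by `δ k → 0`. Stepping from them with steps `t k ≫ δ k`, e.g.
`t k = √(δ k) + 1/(k+1)`, the height can drop by at most `δ k / t k → 0` per unit step while staying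
in the epigraph, so every tangent direction at infinity `(v, r)` has `r ≥ 0`. Hence `(0, -1)` lies
in the polar cone, i.e. `0 ∈ ∂f(∞)`.
-/

lemma exists_pos_tendsto_zero_div_tendsto_zero {δ : ℕ → ℝ} (hδ : Tendsto δ atTop (𝓝 0)) :
    ∃ t : ℕ → ℝ, (∀ k, 0 < t k) ∧ Tendsto t atTop (𝓝 0) ∧
      Tendsto (fun k => δ k / t k) atTop (𝓝 0) := by
  have hsqrt : Tendsto (fun k => √|δ k|) atTop (𝓝 0) := by
    simpa using hδ.abs.sqrt
  refine ⟨fun k => √|δ k| + 1 / (k + 1), fun k => by positivity, ?_, ?_⟩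
  · simpa using hsqrt.add tendsto_one_div_add_atTop_nhds_zero_nat
  · refine squeeze_zero_norm (fun k => ?_) hsqrt
    have hpos : 0 < √|δ k| + 1 / (k + 1) := by positivity
    rw [norm_div, Real.norm_eq_abs, Real.norm_eq_abs, abs_of_pos hpos, div_le_iff₀ hpos]
    have hk : (0 : ℝ) ≤ 1 / (k + 1) := by positivity
    nlinarith [Real.mul_self_sqrt (abs_nonneg (δ k)), mul_nonneg (Real.sqrt_nonneg |δ k|) hk]

section TangentConeAtInfty

variable {E F : Type*} [NormedAddCommGroup E] [NormedSpace ℝ E] [Norm F] {p : E → F} {C : Set E}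

lemma exists_tendsto_eventually_add_smul_mem_of_mem_tangentConeAtInfty {v : E}
    (hv : v ∈ tangentConeAtInfty p C) {z : ℕ → E} {t : ℕ → ℝ} (hzC : ∀ᶠ k in atTop, z k ∈ C)
    (hz : Tendsto (fun k => ‖p (z k)‖) atTop atTop) (ht : ∀ k, 0 < t k)
    (ht₀ : Tendsto t atTop (𝓝 0)) :
    ∃ w : ℕ → E, Tendsto w atTop (𝓝 v) ∧ ∀ᶠ k in atTop, z k + t k • w k ∈ C := by
  obtain ⟨N, hN⟩ := eventually_atTop.1 hzC
  obtain ⟨w, hw, hwC⟩ := hv (fun k => z (k + N)) (fun k => t (k + N))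
    (fun k => hN _ (Nat.le_add_left N k)) (hz.comp (tendsto_add_atTop_nat N))
    (fun k => ht _) (ht₀.comp (tendsto_add_atTop_nat N))
  refine ⟨fun k => w (k - N), hw.comp (tendsto_sub_atTop_nat N), ?_⟩
  filter_upwards [eventually_ge_atTop N] with k hk
  simpa [Nat.sub_add_cancel hk] using hwC (k - N)

lemma nonneg_of_mem_tangentConeAtInfty {ℓ : E →L[ℝ] ℝ} {m : ℝ} (hC : ∀ z ∈ C, m ≤ ℓ z)
    {z : ℕ → E} (hzC : ∀ᶠ k in atTop, z k ∈ C) (hz : Tendsto (fun k => ‖p (z k)‖) atTop atTop)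
    (hℓz : Tendsto (fun k => ℓ (z k)) atTop (𝓝 m)) {v : E} (hv : v ∈ tangentConeAtInfty p C) :
    0 ≤ ℓ v := by
  have hδ : Tendsto (fun k => ℓ (z k) - m) atTop (𝓝 0) := by
    simpa using hℓz.sub_const m
  obtain ⟨t, ht, ht₀, hδt⟩ := exists_pos_tendsto_zero_div_tendsto_zero hδ
  obtain ⟨w, hw, hwC⟩ :=
    exists_tendsto_eventually_add_smul_mem_of_mem_tangentConeAtInfty hv hzC hz ht ht₀
  refine le_of_tendsto_of_tendsto (by simpa using hδt.neg) ((ℓ.continuous.tendsto v).comp hw) ?_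
  filter_upwards [hwC] with k hk
  have hstep : m ≤ ℓ (z k) + t k * ℓ (w k) := by simpa using hC _ hk
  rw [Function.comp_apply, neg_le, le_div_iff₀ (ht k)]
  linarith

end TangentConeAtInfty

/-- Proposition 4.4 (Fermat theorem at infinity): if `f` has finite infimum `f⋆` and
there is a sequence `x k → ∞` with `f (x k) → f⋆`, then `0 ∈ ∂f(∞)`. -/
theorem stmt6 (n : ℕ) (f : En n → EReal) (fstar : ℝ)
    (hinf : (⨅ x : En n, f x) = (fstar : EReal))
    (x : ℕ → En n)
    (hx : Tendsto (fun k => ‖x k‖) atTop atTop)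
    (hfx : Tendsto (fun k => f (x k)) atTop (𝓝 (fstar : EReal))) :
    (0 : En n) ∈ subgradInfty f := by
  have hlb : ∀ y, (fstar : EReal) ≤ f y := fun y => hinf ▸ iInf_le f y
  have hepi : ∀ z ∈ epig f, fstar ≤ ContinuousLinearMap.snd ℝ (En n) ℝ z := fun z hz =>
    EReal.coe_le_coe_iff.1 ((hlb z.1).trans hz)
  have hgraph : ∀ᶠ k in atTop, (x k, (f (x k)).toReal) ∈ epig f := by
    filter_upwards [hfx.eventually_lt_const (EReal.coe_lt_coe_iff.2 (lt_add_one fstar))]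
      with k hk
    rw [epig, mem_ofPred_eq, EReal.coe_toReal hk.ne_top ((EReal.bot_lt_coe fstar).trans_le
      (hlb _)).ne']
  intro q hq
  have hq₂ : 0 ≤ q.2 := nonneg_of_mem_tangentConeAtInfty hepi hgraph hx
    ((EReal.tendsto_toReal (by simp) (by simp)).comp hfx) hq
  simp only [inner_zero_right, zero_add]
  linarith
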